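/- arXiv:1712.01692 — 2 statements merged into one kernel-verified Lean document; each statement's English description precedes it below -/
import Mathlib

section
/- Let θ ∈ ℝ with sin θ ≠ 0, and let F : ℝ² → ℝ be a C² function satisfying cos θ·(F_xx + F_yy) + sin θ·(F_xx·F_yy − F_xy² − 1) = 0 everywhere. Define h(x,y) = cos θ·(x² + y²)/2 + sin θ·F(x,y). Then h satisfies the Monge–Ampère equation h_xx·h_yy − h_xy² = 1 everywhere on ℝ². -/
noncomputable def pdx (u : ℝ → ℝ → ℝ) (x y : ℝ) : ℝ := deriv (fun t => u t y) x
noncomputable def pdy (u : ℝ → ℝ → ℝ) (x y : ℝ) : ℝ := deriv (fun t => u x t) y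

noncomputable def pxx (u : ℝ → ℝ → ℝ) : ℝ → ℝ → ℝ := pdx (pdx u)
noncomputable def pyy (u : ℝ → ℝ → ℝ) : ℝ → ℝ → ℝ := pdy (pdy u)
noncomputable def pxy (u : ℝ → ℝ → ℝ) : ℝ → ℝ → ℝ := pdy (pdx u)

def IsC2 (u : ℝ → ℝ → ℝ) : Prop := ContDiff ℝ 2 (Function.uncurry u)

def IsQuadratic (u : ℝ → ℝ → ℝ) : Prop :=
  ∃ a b c d e f : ℝ, ∀ x y : ℝ, u x y = a*x^2 + b*x*y + c*y^2 + d*x + e*y + f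

/-!
With `c = cos θ` and `s = sin θ`, the Hessian of `h` is `c • I + s • D²F`, so
`det D²h = c² + c s ΔF + s² det D²F`. The special Lagrangian equation multiplied by `s`
turns this into `c² + s² = 1`.
-/

open Function

section Partials

variable {u v : ℝ → ℝ → ℝ} {x y : ℝ}

theorem hasDerivAt_pdx (hu : DifferentiableAt ℝ (uncurry u) (x, y)) :
    HasDerivAt (fun t => u t y) (pdx u x y) x :=
  (show DifferentiableAt ℝ (fun t => u t y) x from hu.comp (f := fun t => (t, y)) x
    (differentiableAt_id.prodMk (differentiableAt_const y))).hasDerivAt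

theorem hasDerivAt_pdy (hu : DifferentiableAt ℝ (uncurry u) (x, y)) :
    HasDerivAt (fun t => u x t) (pdy u x y) y :=
  (show DifferentiableAt ℝ (fun t => u x t) y from hu.comp (f := fun t => (x, t)) y
    ((differentiableAt_const x).prodMk differentiableAt_id)).hasDerivAt

theorem pdx_eq_fderiv (hu : DifferentiableAt ℝ (uncurry u) (x, y)) :
    pdx u x y = fderiv ℝ (uncurry u) (x, y) (1, 0) :=
  (hasDerivAt_pdx hu).unique <| hu.hasFDerivAt.comp_hasDerivAt (f := fun t => (t, y)) x
    ((hasDerivAt_id x).prodMk (hasDerivAt_const x y))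

theorem pdy_eq_fderiv (hu : DifferentiableAt ℝ (uncurry u) (x, y)) :
    pdy u x y = fderiv ℝ (uncurry u) (x, y) (0, 1) :=
  (hasDerivAt_pdy hu).unique <| hu.hasFDerivAt.comp_hasDerivAt (f := fun t => (x, t)) y
    ((hasDerivAt_const y x).prodMk (hasDerivAt_id y))

theorem pdx_add_const_mul (hu : DifferentiableAt ℝ (uncurry u) (x, y))
    (hv : DifferentiableAt ℝ (uncurry v) (x, y)) (s : ℝ) :
    pdx (fun x y => u x y + s * v x y) x y = pdx u x y + s * pdx v x y :=
  ((hasDerivAt_pdx hu).add ((hasDerivAt_pdx hv).const_mul s)).deriv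

theorem pdy_add_const_mul (hu : DifferentiableAt ℝ (uncurry u) (x, y))
    (hv : DifferentiableAt ℝ (uncurry v) (x, y)) (s : ℝ) :
    pdy (fun x y => u x y + s * v x y) x y = pdy u x y + s * pdy v x y :=
  ((hasDerivAt_pdy hu).add ((hasDerivAt_pdy hv).const_mul s)).deriv

end Partials

namespace IsC2

variable {u v : ℝ → ℝ → ℝ}

theorem differentiable (hu : IsC2 u) : Differentiable ℝ (uncurry u) :=
  ContDiff.differentiable hu (by norm_num)

theorem differentiable_pdx (hu : IsC2 u) : Differentiable ℝ (uncurry (pdx u)) := by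
  have hpdx : uncurry (pdx u) = fun p => fderiv ℝ (uncurry u) p (1, 0) :=
    funext fun p => pdx_eq_fderiv (hu.differentiable p)
  rw [hpdx]
  exact ((ContDiff.fderiv_right (m := 1) hu le_rfl).clm_apply contDiff_const).differentiable
    one_ne_zero

theorem differentiable_pdy (hu : IsC2 u) : Differentiable ℝ (uncurry (pdy u)) := by
  have hpdy : uncurry (pdy u) = fun p => fderiv ℝ (uncurry u) p (0, 1) :=
    funext fun p => pdy_eq_fderiv (hu.differentiable p)
  rw [hpdy]
  exact ((ContDiff.fderiv_right (m := 1) hu le_rfl).clm_apply contDiff_const).differentiable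
    one_ne_zero

theorem pdx_add_const_mul_eq (hu : IsC2 u) (hv : IsC2 v) (s : ℝ) :
    pdx (fun x y => u x y + s * v x y) = fun x y => pdx u x y + s * pdx v x y :=
  funext₂ fun _ _ => pdx_add_const_mul (hu.differentiable _) (hv.differentiable _) s

theorem pdy_add_const_mul_eq (hu : IsC2 u) (hv : IsC2 v) (s : ℝ) :
    pdy (fun x y => u x y + s * v x y) = fun x y => pdy u x y + s * pdy v x y :=
  funext₂ fun _ _ => pdy_add_const_mul (hu.differentiable _) (hv.differentiable _) s

theorem pxx_add_const_mul (hu : IsC2 u) (hv : IsC2 v) (s : ℝ) (x y : ℝ) :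
    pxx (fun x y => u x y + s * v x y) x y = pxx u x y + s * pxx v x y := by
  rw [pxx, hu.pdx_add_const_mul_eq hv]
  exact pdx_add_const_mul (hu.differentiable_pdx _) (hv.differentiable_pdx _) s

theorem pyy_add_const_mul (hu : IsC2 u) (hv : IsC2 v) (s : ℝ) (x y : ℝ) :
    pyy (fun x y => u x y + s * v x y) x y = pyy u x y + s * pyy v x y := by
  rw [pyy, hu.pdy_add_const_mul_eq hv]
  exact pdy_add_const_mul (hu.differentiable_pdy _) (hv.differentiable_pdy _) s

theorem pxy_add_const_mul (hu : IsC2 u) (hv : IsC2 v) (s : ℝ) (x y : ℝ) :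
    pxy (fun x y => u x y + s * v x y) x y = pxy u x y + s * pxy v x y := by
  rw [pxy, hu.pdx_add_const_mul_eq hv]
  exact pdy_add_const_mul (hu.differentiable_pdx _) (hv.differentiable_pdx _) s

end IsC2

section Paraboloid

variable (c : ℝ)

theorem isC2_paraboloid : IsC2 fun x y => c * (x ^ 2 + y ^ 2) / 2 := by
  unfold IsC2 uncurry
  fun_prop

theorem pxx_paraboloid (x y : ℝ) : pxx (fun x y => c * (x ^ 2 + y ^ 2) / 2) x y = c := by
  simp [pxx, pdx]

theorem pyy_paraboloid (x y : ℝ) : pyy (fun x y => c * (x ^ 2 + y ^ 2) / 2) x y = c := by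
  simp [pyy, pdy]

theorem pxy_paraboloid (x y : ℝ) : pxy (fun x y => c * (x ^ 2 + y ^ 2) / 2) x y = 0 := by
  simp [pxy, pdx, pdy]

end Paraboloid

theorem stmt_0_general (θ : ℝ) (F : ℝ → ℝ → ℝ) (hF : IsC2 F)
    (hSLE : ∀ x y : ℝ, Real.cos θ * (pxx F x y + pyy F x y) +
      Real.sin θ * (pxx F x y * pyy F x y - (pxy F x y)^2 - 1) = 0)
    (h : ℝ → ℝ → ℝ)
    (hdef : ∀ x y : ℝ, h x y = Real.cos θ * (x^2 + y^2) / 2 + Real.sin θ * F x y) :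
    ∀ x y : ℝ, pxx h x y * pyy h x y - (pxy h x y)^2 = 1 := by
  intro x y
  obtain rfl : h = fun x y => Real.cos θ * (x ^ 2 + y ^ 2) / 2 + Real.sin θ * F x y :=
    funext₂ hdef
  have hQ := isC2_paraboloid (Real.cos θ)
  rw [hQ.pxx_add_const_mul hF, hQ.pyy_add_const_mul hF, hQ.pxy_add_const_mul hF,
    pxx_paraboloid, pyy_paraboloid, pxy_paraboloid]
  linear_combination Real.sin θ * hSLE x y + Real.sin_sq_add_cos_sq θ

theorem stmt_0 (θ : ℝ) (hθ : Real.sin θ ≠ 0) (F : ℝ → ℝ → ℝ) (hF : IsC2 F)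
    (hSLE : ∀ x y : ℝ, Real.cos θ * (pxx F x y + pyy F x y) +
      Real.sin θ * (pxx F x y * pyy F x y - (pxy F x y)^2 - 1) = 0)
    (h : ℝ → ℝ → ℝ)
    (hdef : ∀ x y : ℝ, h x y = Real.cos θ * (x^2 + y^2) / 2 + Real.sin θ * F x y) :
    ∀ x y : ℝ, pxx h x y * pyy h x y - (pxy h x y)^2 = 1 :=
  stmt_0_general θ F hF hSLE h hdef
end

section
/- Let θ ∈ ℝ with sin θ ≠ 0 and suppose every entire C² solution of h_xx·h_yy − h_xy² = 1 on ℝ² is a quadratic polynomial (Jörgens' theorem). Then every entire C² solution F of cos θ·(F_xx + F_yy) + sin θ·(F_xx·F_yy − F_xy² − 1) = 0 on ℝ² is a quadratic polynomial. -/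
/-! The substitution `G = sin θ · F + (cos θ / 2)(x² + y²)` turns the special
Lagrangian equation into `det D²G = sin² θ + cos² θ = 1`: indeed
`det D²G = sin² θ (F_xx F_yy - F_xy²) + sin θ cos θ (F_xx + F_yy) + cos² θ`, and the equation for
`F` says the first two terms add up to `sin² θ`. Jörgens makes `G` quadratic, and since
`sin θ ≠ 0`, so is `F`. -/

open Function

section PartialDerivatives

variable {u v : ℝ → ℝ → ℝ}

theorem ContDiff.differentiableAt_uncurry_left {n : WithTop ℕ∞} (hu : ContDiff ℝ n (uncurry u))
    (hn : n ≠ 0) (x y : ℝ) : DifferentiableAt ℝ (fun t => u t y) x :=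
  show DifferentiableAt ℝ (uncurry u ∘ fun t => (t, y)) x from
    (hu.differentiable hn (x, y)).comp x (differentiableAt_id.prodMk (differentiableAt_const y))

theorem ContDiff.differentiableAt_uncurry_right {n : WithTop ℕ∞} (hu : ContDiff ℝ n (uncurry u))
    (hn : n ≠ 0) (x y : ℝ) : DifferentiableAt ℝ (fun t => u x t) y :=
  show DifferentiableAt ℝ (uncurry u ∘ fun t => (x, t)) y from
    (hu.differentiable hn (x, y)).comp y ((differentiableAt_const x).prodMk differentiableAt_id)

theorem contDiff_uncurry_pdx {n : WithTop ℕ∞} (hu : ContDiff ℝ (n + 1) (uncurry u)) :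
    ContDiff ℝ n (uncurry (pdx u)) := by
  have hpdx : uncurry (pdx u) = fun p => fderiv ℝ (uncurry u) p (1, 0) := by
    ext ⟨x, y⟩
    have hline : HasDerivAt (fun t : ℝ => (t, y)) ((1 : ℝ), (0 : ℝ)) x :=
      (hasDerivAt_id x).prodMk (hasDerivAt_const x y)
    exact (((hu.differentiable (by simp)) (x, y)).hasFDerivAt.comp_hasDerivAt x hline).deriv
  rw [hpdx]
  exact (hu.fderiv_right le_rfl).clm_apply contDiff_const

theorem contDiff_uncurry_pdy {n : WithTop ℕ∞} (hu : ContDiff ℝ (n + 1) (uncurry u)) :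
    ContDiff ℝ n (uncurry (pdy u)) := by
  have hpdy : uncurry (pdy u) = fun p => fderiv ℝ (uncurry u) p (0, 1) := by
    ext ⟨x, y⟩
    have hline : HasDerivAt (fun t : ℝ => (x, t)) ((0 : ℝ), (1 : ℝ)) y :=
      (hasDerivAt_const y x).prodMk (hasDerivAt_id y)
    exact (((hu.differentiable (by simp)) (x, y)).hasFDerivAt.comp_hasDerivAt y hline).deriv
  rw [hpdy]
  exact (hu.fderiv_right le_rfl).clm_apply contDiff_const

theorem pdx_mul_add_mul (a b : ℝ) (hu : ∀ x y, DifferentiableAt ℝ (fun t => u t y) x)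
    (hv : ∀ x y, DifferentiableAt ℝ (fun t => v t y) x) :
    pdx (fun x y => a * u x y + b * v x y) = fun x y => a * pdx u x y + b * pdx v x y := by
  ext x y
  exact (((hu x y).hasDerivAt.const_mul a).add ((hv x y).hasDerivAt.const_mul b)).deriv

theorem pdy_mul_add_mul (a b : ℝ) (hu : ∀ x y, DifferentiableAt ℝ (fun t => u x t) y)
    (hv : ∀ x y, DifferentiableAt ℝ (fun t => v x t) y) :
    pdy (fun x y => a * u x y + b * v x y) = fun x y => a * pdy u x y + b * pdy v x y := by
  ext x y
  exact (((hu x y).hasDerivAt.const_mul a).add ((hv x y).hasDerivAt.const_mul b)).deriv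

theorem IsC2.mul_add_mul (a b : ℝ) (hu : IsC2 u) (hv : IsC2 v) :
    IsC2 (fun x y => a * u x y + b * v x y) :=
  (contDiff_const.mul hu).add (contDiff_const.mul hv)

theorem IsC2.differentiableAt_pdx_left (hu : IsC2 u) (x y : ℝ) :
    DifferentiableAt ℝ (fun t => pdx u t y) x :=
  (contDiff_uncurry_pdx (n := 1) hu).differentiableAt_uncurry_left one_ne_zero x y

theorem IsC2.differentiableAt_pdx_right (hu : IsC2 u) (x y : ℝ) :
    DifferentiableAt ℝ (fun t => pdx u x t) y :=
  (contDiff_uncurry_pdx (n := 1) hu).differentiableAt_uncurry_right one_ne_zero x y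

theorem IsC2.differentiableAt_pdy_right (hu : IsC2 u) (x y : ℝ) :
    DifferentiableAt ℝ (fun t => pdy u x t) y :=
  (contDiff_uncurry_pdy (n := 1) hu).differentiableAt_uncurry_right one_ne_zero x y

theorem pdx_mul_add_mul_of_isC2 (a b : ℝ) (hu : IsC2 u) (hv : IsC2 v) :
    pdx (fun x y => a * u x y + b * v x y) = fun x y => a * pdx u x y + b * pdx v x y :=
  pdx_mul_add_mul a b (ContDiff.differentiableAt_uncurry_left hu two_ne_zero)
    (ContDiff.differentiableAt_uncurry_left hv two_ne_zero)

theorem pdy_mul_add_mul_of_isC2 (a b : ℝ) (hu : IsC2 u) (hv : IsC2 v) :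
    pdy (fun x y => a * u x y + b * v x y) = fun x y => a * pdy u x y + b * pdy v x y :=
  pdy_mul_add_mul a b (ContDiff.differentiableAt_uncurry_right hu two_ne_zero)
    (ContDiff.differentiableAt_uncurry_right hv two_ne_zero)

theorem pxx_mul_add_mul (a b : ℝ) (hu : IsC2 u) (hv : IsC2 v) :
    pxx (fun x y => a * u x y + b * v x y) = fun x y => a * pxx u x y + b * pxx v x y := by
  rw [pxx, pdx_mul_add_mul_of_isC2 a b hu hv]
  exact pdx_mul_add_mul a b hu.differentiableAt_pdx_left hv.differentiableAt_pdx_left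

theorem pyy_mul_add_mul (a b : ℝ) (hu : IsC2 u) (hv : IsC2 v) :
    pyy (fun x y => a * u x y + b * v x y) = fun x y => a * pyy u x y + b * pyy v x y := by
  rw [pyy, pdy_mul_add_mul_of_isC2 a b hu hv]
  exact pdy_mul_add_mul a b hu.differentiableAt_pdy_right hv.differentiableAt_pdy_right

theorem pxy_mul_add_mul (a b : ℝ) (hu : IsC2 u) (hv : IsC2 v) :
    pxy (fun x y => a * u x y + b * v x y) = fun x y => a * pxy u x y + b * pxy v x y := by
  rw [pxy, pdx_mul_add_mul_of_isC2 a b hu hv]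
  exact pdy_mul_add_mul a b hu.differentiableAt_pdx_right hv.differentiableAt_pdx_right

end PartialDerivatives

theorem isC2_sq_add_sq : IsC2 (fun x y : ℝ => x ^ 2 + y ^ 2) :=
  (contDiff_fst.pow 2).add (contDiff_snd.pow 2)

theorem pxx_sq_add_sq (x y : ℝ) : pxx (fun x y : ℝ => x ^ 2 + y ^ 2) x y = 2 := by
  simp [pxx, pdx]

theorem pyy_sq_add_sq (x y : ℝ) : pyy (fun x y : ℝ => x ^ 2 + y ^ 2) x y = 2 := by
  simp [pyy, pdy]

theorem pxy_sq_add_sq (x y : ℝ) : pxy (fun x y : ℝ => x ^ 2 + y ^ 2) x y = 0 := by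
  simp [pxy, pdx, pdy]

theorem isQuadratic_sq_add_sq : IsQuadratic (fun x y : ℝ => x ^ 2 + y ^ 2) :=
  ⟨1, 0, 1, 0, 0, 0, fun x y => by ring⟩

theorem IsQuadratic.mul_add_mul {u v : ℝ → ℝ → ℝ} (a b : ℝ) (hu : IsQuadratic u)
    (hv : IsQuadratic v) : IsQuadratic (fun x y => a * u x y + b * v x y) := by
  obtain ⟨a₁, b₁, c₁, d₁, e₁, f₁, hu⟩ := hu
  obtain ⟨a₂, b₂, c₂, d₂, e₂, f₂, hv⟩ := hv
  refine ⟨a * a₁ + b * a₂, a * b₁ + b * b₂, a * c₁ + b * c₂, a * d₁ + b * d₂, a * e₁ + b * e₂,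
    a * f₁ + b * f₂, fun x y => ?_⟩
  simp only [hu, hv]
  ring

theorem stmt_2 (θ : ℝ) (hθ : Real.sin θ ≠ 0)
    (jorgens : ∀ h : ℝ → ℝ → ℝ, IsC2 h →
      (∀ x y : ℝ, pxx h x y * pyy h x y - (pxy h x y)^2 = 1) → IsQuadratic h)
    (F : ℝ → ℝ → ℝ) (hF : IsC2 F)
    (hSLE : ∀ x y : ℝ, Real.cos θ * (pxx F x y + pyy F x y) +
      Real.sin θ * (pxx F x y * pyy F x y - (pxy F x y)^2 - 1) = 0) :
    IsQuadratic F := by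
  set s := Real.sin θ
  set c := Real.cos θ
  set G : ℝ → ℝ → ℝ := fun x y => s * F x y + c / 2 * (x ^ 2 + y ^ 2)
  have hG : IsC2 G := hF.mul_add_mul s (c / 2) isC2_sq_add_sq
  have hG_det : ∀ x y, pxx G x y * pyy G x y - pxy G x y ^ 2 = 1 := by
    intro x y
    rw [pxx_mul_add_mul s (c / 2) hF isC2_sq_add_sq, pyy_mul_add_mul s (c / 2) hF isC2_sq_add_sq,
      pxy_mul_add_mul s (c / 2) hF isC2_sq_add_sq]
    simp only [pxx_sq_add_sq, pyy_sq_add_sq, pxy_sq_add_sq]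
    linear_combination s * hSLE x y + Real.sin_sq_add_cos_sq θ
  have hF_eq : F = fun x y => s⁻¹ * G x y + (-(c / 2) / s) * (x ^ 2 + y ^ 2) := by
    ext x y
    field_simp
    ring
  rw [hF_eq]
  exact (jorgens G hG hG_det).mul_add_mul _ _ isQuadratic_sq_add_sq
end
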